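/- Let Ω ⊂ ℝ² be a bounded smooth domain and u ∈ W^{2,1}_2(Ω × [0,T], ℝ²) with ∇·u = 0. Let d ∈ C^{2+α, 1+α/2}(Ω̄ × [0,T], S²) solve ∂_t d + u·∇d = Δd + |∇d|² d with boundary value h and initial value d₀. If the third component satisfies d₀³ ≥ 0 in Ω and h³ ≥ 0 on Γ × (0,T), then d³(x,t) ≥ 0 for all (x,t) ∈ Ω × [0,T]. -/

import Mathlib

noncomputable section

open Set

abbrev E2 : Type := EuclideanSpace ℝ (Fin 2)
abbrev E3 : Type := EuclideanSpace ℝ (Fin 3)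

/-- Spatial partial derivative in the `i`-th coordinate direction. -/
def pd {n : ℕ} {F : Type*} [NormedAddCommGroup F] [NormedSpace ℝ F]
    (f : EuclideanSpace ℝ (Fin n) → F) (x : EuclideanSpace ℝ (Fin n)) (i : Fin n) : F :=
  fderiv ℝ f x (EuclideanSpace.single i 1)

/-- The Laplacian `Δf = ∑ᵢ ∂ᵢᵢ f`. -/
def lap {n : ℕ} {F : Type*} [NormedAddCommGroup F] [NormedSpace ℝ F]
    (f : EuclideanSpace ℝ (Fin n) → F) (x : EuclideanSpace ℝ (Fin n)) : F :=
  ∑ i, pd (fun y => pd f y i) x i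

/-- The squared gradient `|∇f|² = ∑ᵢ |∂ᵢ f|²`. -/
def gradSq {n : ℕ} {F : Type*} [NormedAddCommGroup F] [NormedSpace ℝ F]
    (f : EuclideanSpace ℝ (Fin n) → F) (x : EuclideanSpace ℝ (Fin n)) : ℝ :=
  ∑ i, ‖pd f x i‖ ^ 2

/-- The divergence `∇·u = ∑ᵢ ∂ᵢ uⁱ`. -/
def divg {n : ℕ} (u : EuclideanSpace ℝ (Fin n) → EuclideanSpace ℝ (Fin n))
    (x : EuclideanSpace ℝ (Fin n)) : ℝ :=
  ∑ i, pd u x i i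

/-!
Minimum principle. The third component `w = d³` solves `∂ₜw + u·∇w = Δw + |∇d|² w`, and
`|∇d|² ≤ K`, so `∂ₜw + u·∇w - Δw ≥ K w` wherever `w < 0`. Suppose `e^{-(K+1)t} w` had a negative
minimum over `Ω̄ × [0, t₁]`. The boundary and initial data place it at an interior point with
`t > 0`, where `∇w = 0`, `Δw ≥ 0` and `∂ₜw ≤ (K+1) w`; then `K w ≤ ∂ₜw ≤ (K+1) w`, impossible for
`w < 0`. This gives `w ≥ 0` for `t < T`, and continuity gives it at `t = T`.
-/

open Filter Topology

section Calculus

variable {n : ℕ} {F G : Type*} [NormedAddCommGroup F] [NormedSpace ℝ F]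
  [NormedAddCommGroup G] [NormedSpace ℝ G]
  {f g : EuclideanSpace ℝ (Fin n) → F} {x : EuclideanSpace ℝ (Fin n)}

lemma pd_congr_of_eventuallyEq (h : f =ᶠ[𝓝 x] g) (i : Fin n) : pd f x i = pd g x i := by
  rw [pd, pd, h.fderiv_eq]

lemma fderiv_clm_comp_apply (ℓ : F →L[ℝ] G) (hf : DifferentiableAt ℝ f x)
    (v : EuclideanSpace ℝ (Fin n)) :
    fderiv ℝ (fun y => ℓ (f y)) x v = ℓ (fderiv ℝ f x v) :=
  DFunLike.congr_fun (ℓ.hasFDerivAt.comp x hf.hasFDerivAt).fderiv v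

lemma differentiableAt_pd (hf : ContDiffAt ℝ 2 f x) (i : Fin n) :
    DifferentiableAt ℝ (fun y => pd f y i) x :=
  ((hf.fderiv_right (m := 1) (by norm_num)).differentiableAt (by norm_num)).clm_apply
    (differentiableAt_const _)

lemma lap_clm_comp (ℓ : F →L[ℝ] G) (hf : ContDiffAt ℝ 2 f x) :
    lap (fun y => ℓ (f y)) x = ℓ (lap f x) := by
  have hpd : ∀ i, (fun y => pd (fun z => ℓ (f z)) y i) =ᶠ[𝓝 x] fun y => ℓ (pd f y i) := by
    intro i
    filter_upwards [hf.eventually (by simp)] with y hy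
    exact fderiv_clm_comp_apply ℓ (hy.differentiableAt (by norm_num)) _
  simp only [lap, map_sum]
  refine Finset.sum_congr rfl fun i _ => ?_
  rw [pd_congr_of_eventuallyEq (hpd i)]
  exact fderiv_clm_comp_apply ℓ (differentiableAt_pd hf i) _

end Calculus

lemma IsLocalMin.deriv_deriv_nonneg {f : ℝ → ℝ} {a : ℝ} (hmin : IsLocalMin f a)
    (hf : ContinuousAt f a) : 0 ≤ deriv (deriv f) a := by
  by_contra! hneg
  -- A negative second derivative makes `a` a local maximum as well, so `f` is locally constant.
  have hmax := isLocalMax_of_deriv_deriv_neg hneg hmin.deriv_eq_zero hf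
  have hconst : f =ᶠ[𝓝 a] fun _ => f a := by
    filter_upwards [hmin, hmax] with y hy₁ hy₂
    exact le_antisymm hy₂ hy₁
  have hderiv : deriv f =ᶠ[𝓝 a] fun _ => 0 := by
    filter_upwards [hconst.deriv] with y hy
    rw [hy, deriv_const]
  rw [hderiv.deriv_eq, deriv_const] at hneg
  exact lt_irrefl 0 hneg

lemma IsLocalMin.pd_pd_nonneg {n : ℕ} {φ : EuclideanSpace ℝ (Fin n) → ℝ}
    {x : EuclideanSpace ℝ (Fin n)} (hmin : IsLocalMin φ x) (hφ : ContDiffAt ℝ 2 φ x)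
    (i : Fin n) : 0 ≤ pd (fun y => pd φ y i) x i := by
  let e : EuclideanSpace ℝ (Fin n) := EuclideanSpace.single i 1
  let line : ℝ → EuclideanSpace ℝ (Fin n) := fun s => x + s • e
  have hline : ∀ s, HasDerivAt line e s := fun s => by
    simpa only [id, one_smul] using ((hasDerivAt_id s).smul_const e).const_add x
  have hline_zero : x = line 0 := by simp [line]
  have hline_cont : ContinuousAt line 0 := (hline 0).continuousAt
  have hderiv : deriv (φ ∘ line) =ᶠ[𝓝 0] fun s => pd φ (line s) i := by
    have hφ_near := hline_cont.eventually (hline_zero ▸ hφ.eventually (by simp))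
    filter_upwards [hφ_near] with s hs
    exact ((hs.differentiableAt (by norm_num)).hasFDerivAt.comp_hasDerivAt s (hline s)).deriv
  have hderiv₂ : HasDerivAt (fun s => pd φ (line s) i) (pd (fun y => pd φ y i) x i) 0 :=
    (differentiableAt_pd hφ i).hasFDerivAt.comp_hasDerivAt_of_eq 0 (hline 0) hline_zero
  have hmin_line : IsLocalMin (φ ∘ line) 0 := (hline_zero ▸ hmin).comp_continuous hline_cont
  rw [← hderiv₂.deriv, ← hderiv.deriv_eq]
  exact hmin_line.deriv_deriv_nonneg (hφ.continuousAt.comp_of_eq hline_cont hline_zero.symm)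

lemma IsLocalMin.lap_nonneg {n : ℕ} {φ : EuclideanSpace ℝ (Fin n) → ℝ}
    {x : EuclideanSpace ℝ (Fin n)} (hmin : IsLocalMin φ x) (hφ : ContDiffAt ℝ 2 φ x) :
    0 ≤ lap φ x :=
  Finset.sum_nonneg fun i _ => hmin.pd_pd_nonneg hφ i

lemma HasDerivAt.nonpos_of_isMinOn_Icc {g : ℝ → ℝ} {a b m : ℝ} (hab : a < b)
    (hmin : IsMinOn g (Icc a b) b) (hg : HasDerivAt g m b) : m ≤ 0 := by
  have hcone : a - b ∈ posTangentConeAt (Icc a b) b :=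
    sub_mem_posTangentConeAt_of_segment_subset
      ((convex_Icc a b).segment_subset (right_mem_Icc.2 hab.le) (left_mem_Icc.2 hab.le))
  have h := hmin.localize.hasFDerivWithinAt_nonneg hg.hasFDerivAt.hasFDerivWithinAt hcone
  rw [ContinuousLinearMap.toSpanSingleton_apply, smul_eq_mul] at h
  nlinarith

lemma deriv_le_mul_of_isMinOn_exp_mul {f : ℝ → ℝ} {c a b : ℝ} (hab : a < b)
    (hmin : IsMinOn (fun s => Real.exp (-c * s) * f s) (Icc a b) b)
    (hf : DifferentiableAt ℝ f b) : deriv f b ≤ c * f b := by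
  have hweighted : HasDerivAt (fun s => Real.exp (-c * s) * f s)
      (Real.exp (-c * b) * (deriv f b - c * f b)) b := by
    refine (((hasDerivAt_id' b).const_mul (-c)).exp.mul hf.hasDerivAt).congr_deriv ?_
    ring
  have := hweighted.nonpos_of_isMinOn_Icc hab hmin
  nlinarith [Real.exp_pos (-c * b)]

section MinimumPrinciple

variable {n : ℕ} {Ω : Set (EuclideanSpace ℝ (Fin n))} {I J : Set ℝ} {T K : ℝ}
  {w : EuclideanSpace ℝ (Fin n) × ℝ → ℝ}
  {b : EuclideanSpace ℝ (Fin n) × ℝ → EuclideanSpace ℝ (Fin n)}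

/-- `∂ₜw + b·∇w - Δw ≥ K w` on `(Ω × I) ∩ {w < 0}`, with the regularity that gives it a meaning. -/
def IsSupersolutionOnNegSet (w : EuclideanSpace ℝ (Fin n) × ℝ → ℝ)
    (b : EuclideanSpace ℝ (Fin n) × ℝ → EuclideanSpace ℝ (Fin n)) (K : ℝ)
    (Ω : Set (EuclideanSpace ℝ (Fin n))) (I : Set ℝ) : Prop :=
  ∀ t ∈ I, ∀ x ∈ Ω, ContDiffAt ℝ 2 (fun y => w (y, t)) x ∧
    DifferentiableAt ℝ (fun s => w (x, s)) t ∧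
    (w (x, t) < 0 → K * w (x, t) ≤ deriv (fun s => w (x, s)) t +
      fderiv ℝ (fun y => w (y, t)) x (b (x, t)) - lap (fun y => w (y, t)) x)

lemma IsSupersolutionOnNegSet.mono (hw : IsSupersolutionOnNegSet w b K Ω I) (hJI : J ⊆ I) :
    IsSupersolutionOnNegSet w b K Ω J :=
  fun t ht => hw t (hJI ht)

theorem IsSupersolutionOnNegSet.nonneg_of_Ioc (hw : IsSupersolutionOnNegSet w b K Ω (Ioc 0 T))
    (hΩo : IsOpen Ω) (hΩb : Bornology.IsBounded Ω)
    (hw_cont : ContinuousOn w (closure Ω ×ˢ Icc 0 T))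
    (hbdry : ∀ x ∈ frontier Ω, ∀ t ∈ Icc 0 T, 0 ≤ w (x, t))
    (hinit : ∀ x ∈ closure Ω, 0 ≤ w (x, 0)) :
    ∀ x ∈ closure Ω, ∀ t ∈ Icc 0 T, 0 ≤ w (x, t) := by
  intro x hx t ht
  let v : EuclideanSpace ℝ (Fin n) × ℝ → ℝ := fun p => Real.exp (-(K + 1) * p.2) * w p
  have hv_cont : ContinuousOn v (closure Ω ×ˢ Icc 0 T) :=
    (Real.continuous_exp.comp (continuous_const.mul continuous_snd)).continuousOn.mul hw_cont
  obtain ⟨⟨x₀, t₀⟩, ⟨hx₀, ht₀⟩, hmin⟩ := (hΩb.isCompact_closure.prod isCompact_Icc).exists_isMinOn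
    ⟨(x, t), hx, ht⟩ hv_cont
  rw [isMinOn_iff] at hmin
  have hw₀ : 0 ≤ w (x₀, t₀) := by
    by_contra! hw₀
    have hx₀Ω : x₀ ∈ Ω := by
      by_contra hx₀Ω
      exact hw₀.not_ge (hbdry x₀ (hΩo.frontier_eq ▸ ⟨hx₀, hx₀Ω⟩) t₀ ht₀)
    have ht₀_pos : 0 < t₀ :=
      ht₀.1.lt_of_ne (by rintro rfl; exact hw₀.not_ge (hinit x₀ hx₀))
    obtain ⟨hw_x, hw_t, hsuper⟩ := hw t₀ ⟨ht₀_pos, ht₀.2⟩ x₀ hx₀Ω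
    have hmin_x : IsLocalMin (fun y => w (y, t₀)) x₀ := by
      filter_upwards [hΩo.mem_nhds hx₀Ω] with y hy
      exact le_of_mul_le_mul_left (hmin (y, t₀) ⟨subset_closure hy, ht₀⟩) (Real.exp_pos _)
    have hmin_t : IsMinOn (fun s => Real.exp (-(K + 1) * s) * w (x₀, s)) (Icc 0 t₀) t₀ :=
      fun s hs => hmin (x₀, s) ⟨hx₀, hs.1, hs.2.trans ht₀.2⟩
    have hdt := deriv_le_mul_of_isMinOn_exp_mul ht₀_pos hmin_t hw_t
    have hlap := hmin_x.lap_nonneg hw_x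
    have hsuper := hsuper hw₀
    rw [hmin_x.fderiv_eq_zero, zero_apply] at hsuper
    linarith
  exact nonneg_of_mul_nonneg_right
    ((mul_nonneg (Real.exp_pos _).le hw₀).trans (hmin (x, t) ⟨hx, ht⟩)) (Real.exp_pos _)

theorem IsSupersolutionOnNegSet.nonneg (hw : IsSupersolutionOnNegSet w b K Ω (Ioo 0 T))
    (hΩo : IsOpen Ω) (hΩb : Bornology.IsBounded Ω) (hT : 0 < T)
    (hw_cont : ContinuousOn w (closure Ω ×ˢ Icc 0 T))
    (hbdry : ∀ x ∈ frontier Ω, ∀ t ∈ Icc 0 T, 0 ≤ w (x, t))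
    (hinit : ∀ x ∈ closure Ω, 0 ≤ w (x, 0)) :
    ∀ x ∈ closure Ω, ∀ t ∈ Icc 0 T, 0 ≤ w (x, t) := by
  have hbefore : ∀ p ∈ closure Ω ×ˢ Ico 0 T, 0 ≤ w p := fun ⟨x, t⟩ ⟨hx, ht⟩ =>
    (hw.mono (Ioc_subset_Ioo_right ht.2)).nonneg_of_Ioc hΩo hΩb
      (hw_cont.mono (prod_mono_right (Icc_subset_Icc_right ht.2.le)))
      (fun y hy s hs => hbdry y hy s ⟨hs.1, hs.2.trans ht.2.le⟩) hinit x hx t ⟨ht.1, le_rfl⟩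
  have hclosure : closure (closure Ω ×ˢ Ico 0 T) = closure Ω ×ˢ Icc 0 T := by
    rw [closure_prod_eq, closure_closure, closure_Ico hT.ne]
  intro x hx t ht
  refine le_on_closure hbefore continuousOn_const (hclosure ▸ hw_cont) ?_
  exact hclosure ▸ ⟨hx, ht⟩

lemma isSupersolutionOnNegSet_clm_comp_of_harmonicMapFlow {F : Type*} [NormedAddCommGroup F]
    [NormedSpace ℝ F] {d : EuclideanSpace ℝ (Fin n) × ℝ → F} (ℓ : F →L[ℝ] ℝ)
    (hd_x : ∀ t ∈ I, ∀ x ∈ Ω, ContDiffAt ℝ 2 (fun y => d (y, t)) x)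
    (hd_t : ∀ t ∈ I, ∀ x ∈ Ω, DifferentiableAt ℝ (fun s => d (x, s)) t)
    (hgrad : ∀ t ∈ I, ∀ x ∈ Ω, gradSq (fun y => d (y, t)) x ≤ K)
    (hpde : ∀ t ∈ I, ∀ x ∈ Ω,
      deriv (fun s => d (x, s)) t + fderiv ℝ (fun y => d (y, t)) x (b (x, t))
        = lap (fun y => d (y, t)) x + gradSq (fun y => d (y, t)) x • d (x, t)) :
    IsSupersolutionOnNegSet (fun p => ℓ (d p)) b K Ω I := by
  intro t ht x hx
  have hdx := hd_x t ht x hx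
  have hdt := hd_t t ht x hx
  refine ⟨ℓ.contDiff.contDiffAt.comp x hdx, ℓ.differentiableAt.comp t hdt, fun hneg => ?_⟩
  have hpde_ℓ := congrArg ℓ (hpde t ht x hx)
  simp only [map_add, map_smul, smul_eq_mul] at hpde_ℓ
  have hderiv : deriv (fun s => ℓ (d (x, s))) t = ℓ (deriv (fun s => d (x, s)) t) :=
    (ℓ.hasFDerivAt.comp_hasDerivAt t hdt.hasDerivAt).deriv
  rw [hderiv, fderiv_clm_comp_apply ℓ (hdx.differentiableAt (by norm_num)), lap_clm_comp ℓ hdx]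
  linarith [mul_le_mul_of_nonpos_right (hgrad t ht x hx) hneg.le]

end MinimumPrinciple

theorem third_component_nonneg_preserved_general
    (Ω : Set E2) (T : ℝ) (hΩo : IsOpen Ω) (hΩb : Bornology.IsBounded Ω) (hT : 0 < T)
    (u : E2 × ℝ → E2) (d : E2 × ℝ → E3)
    (hd_cont : ContinuousOn d (closure Ω ×ˢ Icc 0 T))
    (hd_x : ∀ t ∈ Ioo 0 T, ∀ x ∈ Ω, ContDiffAt ℝ 2 (fun y => d (y, t)) x)
    (hd_t : ∀ t ∈ Ioo 0 T, ∀ x ∈ Ω, DifferentiableAt ℝ (fun s => d (x, s)) t)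
    (hgrad_bdd : ∃ K : ℝ, ∀ t ∈ Ioo 0 T, ∀ x ∈ Ω, gradSq (fun y => d (y, t)) x ≤ K)
    (hpde : ∀ t ∈ Ioo 0 T, ∀ x ∈ Ω,
      deriv (fun s => d (x, s)) t + fderiv ℝ (fun y => d (y, t)) x (u (x, t))
        = lap (fun y => d (y, t)) x + gradSq (fun y => d (y, t)) x • d (x, t))
    (hbdry : ∀ x ∈ frontier Ω, ∀ t ∈ Icc (0 : ℝ) T, 0 ≤ d (x, t) 2)
    (hinit : ∀ x ∈ closure Ω, 0 ≤ d (x, 0) 2) :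
    ∀ x ∈ closure Ω, ∀ t ∈ Icc (0 : ℝ) T, 0 ≤ d (x, t) 2 := by
  obtain ⟨K, hK⟩ := hgrad_bdd
  let π₃ : E3 →L[ℝ] ℝ := EuclideanSpace.proj 2
  exact (isSupersolutionOnNegSet_clm_comp_of_harmonicMapFlow π₃ hd_x hd_t hK hpde).nonneg
    hΩo hΩb hT (π₃.continuous.comp_continuousOn hd_cont) hbdry hinit

/-- **Preservation of the upper hemisphere.**  Let `Ω ⊂ ℝ²` be a bounded open
(smooth) domain, `u` divergence-free (of class `W^{2,1}_2`, encoded by `C¹` spatial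
regularity), and `d : Ω̄ × [0,T] → S² ⊂ ℝ³` a solution (of class `C^{2+α,1+α/2}`,
encoded by continuity up to the boundary, interior regularity and a gradient bound)
of `∂ₜ d + u·∇d = Δd + |∇d|² d` with boundary value `h` and initial value `d₀`.
If the third components satisfy `d₀³ ≥ 0` in `Ω̄` and `h³ ≥ 0` on `∂Ω × [0,T]`,
then `d³(x,t) ≥ 0` for all `(x,t) ∈ Ω̄ × [0,T]`. -/
theorem third_component_nonneg_preserved
    (Ω : Set E2) (T : ℝ) (hΩo : IsOpen Ω) (hΩb : Bornology.IsBounded Ω) (hT : 0 < T)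
    (u : E2 × ℝ → E2) (d : E2 × ℝ → E3)
    (hu_reg : ∀ t ∈ Ioo 0 T, ∀ x ∈ Ω, ContDiffAt ℝ 1 (fun y => u (y, t)) x)
    (hdiv : ∀ t ∈ Ioo 0 T, ∀ x ∈ Ω, divg (fun y => u (y, t)) x = 0)
    (hd_cont : ContinuousOn d (closure Ω ×ˢ Icc 0 T))
    (hd_x : ∀ t ∈ Ioo 0 T, ∀ x ∈ Ω, ContDiffAt ℝ 2 (fun y => d (y, t)) x)
    (hd_t : ∀ t ∈ Ioo 0 T, ∀ x ∈ Ω, DifferentiableAt ℝ (fun s => d (x, s)) t)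
    (hd_unit : ∀ x ∈ closure Ω, ∀ t ∈ Icc (0 : ℝ) T, ‖d (x, t)‖ = 1)
    (hgrad_bdd : ∃ K : ℝ, ∀ t ∈ Ioo 0 T, ∀ x ∈ Ω, gradSq (fun y => d (y, t)) x ≤ K)
    (hpde : ∀ t ∈ Ioo 0 T, ∀ x ∈ Ω,
      deriv (fun s => d (x, s)) t + fderiv ℝ (fun y => d (y, t)) x (u (x, t))
        = lap (fun y => d (y, t)) x + gradSq (fun y => d (y, t)) x • d (x, t))
    (hbdry : ∀ x ∈ frontier Ω, ∀ t ∈ Icc (0 : ℝ) T, 0 ≤ d (x, t) 2)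
    (hinit : ∀ x ∈ closure Ω, 0 ≤ d (x, 0) 2) :
    ∀ x ∈ closure Ω, ∀ t ∈ Icc (0 : ℝ) T, 0 ≤ d (x, t) 2 :=
  third_component_nonneg_preserved_general Ω T hΩo hΩb hT u d hd_cont hd_x hd_t hgrad_bdd hpde hbdry
    hinit
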